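/- Let (G, σ) be a signed graph and let c : V(G) → {−2,−1,1,2} be a signed 4-coloring of (G, σ). Then for every cycle C of G, the number of edges uv of C with σ(uv)·c(u)·c(v) = 2 is congruent modulo 2 to the number of edges e of C with σ(e) = +1. -/

import Mathlib

/-!
Let `ν v ∈ ZMod 2` record whether `c v` is negative. On every edge `uw`,
`[σ(uw) c(u) c(w) = 2] ≡ [σ(uw) = 1] + ν w - ν u (mod 2)`, a finite check using the coloring
condition. Summed around a closed walk the terms `ν w - ν u` telescope to zero.
-/

theorem List.cast_length_filter {α R : Type*} [NonAssocSemiring R] (p : α → Prop)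
    [DecidablePred p] (l : List α) :
    ((l.filter fun x => decide (p x)).length : R) = (l.map fun x => if p x then 1 else 0).sum := by
  induction l with
  | nil => simp
  | cons a l ih => by_cases h : p a <;> simp [h, ih, add_comm]

theorem SimpleGraph.Walk.sum_darts_sub {V M : Type*} [AddCommGroup M] {G : SimpleGraph V}
    (f : V → M) {u v : V} (p : G.Walk u v) :
    (p.darts.map fun d => f d.snd - f d.fst).sum = f v - f u := by
  induction p with
  | nil => simp
  | cons _ q ih => simp only [darts_cons, List.map_cons, List.sum_cons, ih]; abel

/-- If `|a| = |b|`, the coloring condition forces `a = -s b`, so `s a b < 0`; otherwise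
`|s a b| = 2`. In both cases `[s a b = 2]` is the parity of the number of negative factors
plus one. -/
theorem boole_mul_mul_eq_two {s a b : ℤ} (hs : s = 1 ∨ s = -1)
    (ha : a = -2 ∨ a = -1 ∨ a = 1 ∨ a = 2) (hb : b = -2 ∨ b = -1 ∨ b = 1 ∨ b = 2)
    (hab : a ≠ s * b) :
    (if s * a * b = 2 then 1 else 0 : ZMod 2)
      = (if s = 1 then 1 else 0) + ((if b < 0 then 1 else 0) - (if a < 0 then 1 else 0)) := by
  rcases hs with rfl | rfl <;> rcases ha with rfl | rfl | rfl | rfl <;>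
    rcases hb with rfl | rfl | rfl | rfl <;> revert hab <;> decide

theorem a_edges_parity_eq_positive_edges_parity_general {V : Type*}
    (G : SimpleGraph V) (σ : V → V → ℤ)
    (hsign : ∀ u w, G.Adj u w → σ u w = 1 ∨ σ u w = -1)
    (c : V → ℤ)
    (hrange : ∀ u, c u = -2 ∨ c u = -1 ∨ c u = 1 ∨ c u = 2)
    (hc : ∀ u w, G.Adj u w → c u ≠ σ u w * c w)
    {u : V} (C : G.Walk u u) :
    (C.darts.filter (fun d => σ d.fst d.snd * c d.fst * c d.snd = 2)).length
      ≡ (C.darts.filter (fun d => σ d.fst d.snd = 1)).length [MOD 2] := by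
  obtain ⟨ν, hν⟩ : ∃ ν : V → ZMod 2, ∀ v, ν v = if c v < 0 then 1 else 0 := ⟨_, fun _ => rfl⟩
  have hedge : ∀ d ∈ C.darts,
      (if σ d.fst d.snd * c d.fst * c d.snd = 2 then 1 else 0 : ZMod 2)
        = (if σ d.fst d.snd = 1 then 1 else 0) + (ν d.snd - ν d.fst) := fun d _ => by
    simpa only [hν] using
      boole_mul_mul_eq_two (hsign _ _ d.adj) (hrange _) (hrange _) (hc _ _ d.adj)
  rw [← ZMod.natCast_eq_natCast_iff, List.cast_length_filter, List.cast_length_filter,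
    List.map_congr_left hedge, List.sum_map_add, C.sum_darts_sub, sub_self, add_zero]

/-- **Around any cycle, the number of `a`-type edges has the parity of the number of
positive edges.**  Let `(G, σ)` be a signed graph and `c : V → {-2,-1,1,2}` a signed
4-coloring (i.e. `c u ≠ σ u w * c w` for every edge `u w`).  Then for every cycle `C`
of `G`, the number of edges `u w` of `C` with `σ u w * c u * c w = 2` is congruent
modulo 2 to the number of edges `e` of `C` with `σ e = 1`. -/
theorem a_edges_parity_eq_positive_edges_parity {V : Type*} [DecidableEq V]
    (G : SimpleGraph V) (σ : V → V → ℤ)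
    (hsym : ∀ u w, σ u w = σ w u)
    (hsign : ∀ u w, G.Adj u w → σ u w = 1 ∨ σ u w = -1)
    (c : V → ℤ)
    (hrange : ∀ u, c u = -2 ∨ c u = -1 ∨ c u = 1 ∨ c u = 2)
    (hc : ∀ u w, G.Adj u w → c u ≠ σ u w * c w)
    {u : V} (C : G.Walk u u) (hC : C.IsCycle) :
    (C.darts.filter (fun d => σ d.fst d.snd * c d.fst * c d.snd = 2)).length
      ≡ (C.darts.filter (fun d => σ d.fst d.snd = 1)).length [MOD 2] :=
  a_edges_parity_eq_positive_edges_parity_general G σ hsign c hrange hc C
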